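/- For every x ∈ ℝ^n, the Jacobian matrix (dF/dx)(x) satisfies (dF/dx)(x) · 1_n = 1_n, i.e. 1_n is an eigenvector of (dF/dx)(x) with eigenvalue 1. -/

import Mathlib

/-!
Shifting `x` by `t • 1` multiplies `Kᵀ eˣ` by `eᵗ`, hence divides `K (b ⊘ Kᵀ eˣ)` by `eᵗ`, so
`F (x + t • 1) = F x + t • 1`. Differentiating in `t` at `0` shows that the derivative of `F` in
the direction `1` is `1`, and the Jacobian applied to `1` is exactly that directional derivative.
-/

open Finset Matrix

theorem fderiv_apply_eq_of_map_add_smul {𝕜 E G : Type*} [NontriviallyNormedField 𝕜]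
    [NormedAddCommGroup E] [NormedSpace 𝕜 E] [NormedAddCommGroup G] [NormedSpace 𝕜 G]
    {f : E → G} {x v : E} {w : G} (hf : DifferentiableAt 𝕜 f x)
    (h : ∀ t : 𝕜, f (x + t • v) = f x + t • w) :
    fderiv 𝕜 f x v = w := by
  have hline : HasLineDerivAt 𝕜 f w x v := by
    simp only [HasLineDerivAt, h]
    simpa using ((hasDerivAt_id (0 : 𝕜)).smul_const w).const_add (f x)
  rw [← hf.lineDeriv_eq_fderiv, hline.lineDeriv]

section Sinkhorn

variable {ι κ : Type*} [Fintype ι]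

theorem sum_mul_exp_pos [Nonempty ι] {K : Matrix ι κ ℝ} (hK : ∀ i j, 0 < K i j)
    (x : ι → ℝ) (j : κ) : 0 < ∑ i', K i' j * Real.exp (x i') :=
  sum_pos (fun i' _ => mul_pos (hK i' j) (Real.exp_pos _)) univ_nonempty

variable [Fintype κ]

noncomputable def sinkhornMap (a : ι → ℝ) (b : κ → ℝ) (K : Matrix ι κ ℝ) (x : ι → ℝ) : ι → ℝ :=
  fun i => Real.log (a i) - Real.log (∑ j, K i j * (b j / ∑ i', K i' j * Real.exp (x i')))

variable [Nonempty ι] [Nonempty κ] (a : ι → ℝ) {b : κ → ℝ} {K : Matrix ι κ ℝ}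

theorem sum_mul_div_sum_mul_exp_pos (hb : ∀ j, 0 < b j) (hK : ∀ i j, 0 < K i j)
    (x : ι → ℝ) (i : ι) :
    0 < ∑ j, K i j * (b j / ∑ i', K i' j * Real.exp (x i')) :=
  sum_pos (fun j _ => mul_pos (hK i j) (div_pos (hb j) (sum_mul_exp_pos hK x j))) univ_nonempty

theorem differentiable_sinkhornMap (hb : ∀ j, 0 < b j) (hK : ∀ i j, 0 < K i j) :
    Differentiable ℝ (sinkhornMap a b K) := by
  intro x
  rw [differentiableAt_pi]
  intro i
  have hT := fun j => (sum_mul_exp_pos hK x j).ne'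
  have hS := (sum_mul_div_sum_mul_exp_pos hb hK x i).ne'
  unfold sinkhornMap
  fun_prop (disch := first | exact hS | exact hT _)

theorem sinkhornMap_add_smul_one (hb : ∀ j, 0 < b j) (hK : ∀ i j, 0 < K i j)
    (x : ι → ℝ) (t : ℝ) :
    sinkhornMap a b K (x + t • 1) = sinkhornMap a b K x + t • 1 := by
  have hT (j : κ) : ∑ i', K i' j * Real.exp ((x + t • 1) i') =
      Real.exp t * ∑ i', K i' j * Real.exp (x i') := by
    simp only [mul_sum, Pi.add_apply, Pi.smul_apply, Pi.one_apply, smul_eq_mul, mul_one,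
      Real.exp_add]
    exact sum_congr rfl fun _ _ => by ring
  ext i
  have hS : ∑ j, K i j * (b j / ∑ i', K i' j * Real.exp ((x + t • 1) i')) =
      (∑ j, K i j * (b j / ∑ i', K i' j * Real.exp (x i'))) / Real.exp t := by
    simp only [hT, sum_div]
    exact sum_congr rfl fun _ _ => by ring
  rw [Pi.add_apply, sinkhornMap, sinkhornMap, hS,
    Real.log_div (sum_mul_div_sum_mul_exp_pos hb hK x i).ne' (Real.exp_ne_zero t), Real.log_exp]
  simp only [Pi.smul_apply, Pi.one_apply, smul_eq_mul, mul_one]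
  ring

end Sinkhorn

theorem ones_eigenvector_of_sinkhorn_jacobian_general
    (n m : ℕ) (hn : 0 < n) (hm : 0 < m)
    (a : Fin n → ℝ) (b : Fin m → ℝ) (K : Matrix (Fin n) (Fin m) ℝ)
    (hb_pos : ∀ j, 0 < b j)
    (hK_pos : ∀ i j, 0 < K i j)
    (F : (Fin n → ℝ) → Fin n → ℝ)
    (hF : ∀ x i, F x i = Real.log (a i) -
      Real.log (∑ j, K i j * (b j / ∑ i', K i' j * Real.exp (x i'))))
    (J : (Fin n → ℝ) → Matrix (Fin n) (Fin n) ℝ)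
    (hJ : ∀ x j i, J x j i = fderiv ℝ F x (Pi.single i 1) j) :
    ∀ x : Fin n → ℝ, (J x).mulVec (fun _ => 1) = fun _ => 1 := by
  have : Nonempty (Fin n) := Fin.pos_iff_nonempty.mp hn
  have : Nonempty (Fin m) := Fin.pos_iff_nonempty.mp hm
  obtain rfl : F = sinkhornMap a b K := funext₂ hF
  intro x
  have hJx : J x = LinearMap.toMatrix' (fderiv ℝ (sinkhornMap a b K) x : _ →ₗ[ℝ] _) := by
    ext j i
    rw [hJ, LinearMap.toMatrix'_apply, ContinuousLinearMap.coe_coe]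
  rw [hJx, LinearMap.toMatrix'_mulVec]
  exact fderiv_apply_eq_of_map_add_smul (differentiable_sinkhornMap a hb_pos hK_pos x)
    (sinkhornMap_add_smul_one a hb_pos hK_pos x)

/-- The all-ones vector is an eigenvector of the Jacobian of the Sinkhorn map `F`
with eigenvalue `1`: `(dF/dx)(x) · 1ₙ = 1ₙ`. -/
theorem ones_eigenvector_of_sinkhorn_jacobian
    (n m : ℕ) (hn : 0 < n) (hm : 0 < m)
    (a : Fin n → ℝ) (b : Fin m → ℝ) (K : Matrix (Fin n) (Fin m) ℝ)
    (ha_pos : ∀ i, 0 < a i) (ha_sum : ∑ i, a i = 1)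
    (hb_pos : ∀ j, 0 < b j) (hb_sum : ∑ j, b j = 1)
    (hK_pos : ∀ i j, 0 < K i j)
    (F : (Fin n → ℝ) → Fin n → ℝ)
    (hF : ∀ x i, F x i = Real.log (a i) -
      Real.log (∑ j, K i j * (b j / ∑ i', K i' j * Real.exp (x i'))))
    (J : (Fin n → ℝ) → Matrix (Fin n) (Fin n) ℝ)
    (hJ : ∀ x j i, J x j i = fderiv ℝ F x (Pi.single i 1) j) :
    ∀ x : Fin n → ℝ, (J x).mulVec (fun _ => 1) = fun _ => 1 :=
  ones_eigenvector_of_sinkhorn_jacobian_general n m hn hm a b K hb_pos hK_pos F hF J hJ
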